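/- Let F be a factorial monoid and H ⊆ F a gap absorbing submonoid, i.e., H^× = F^× ∩ H, H ≠ H^×, and 𝒢(H)·𝒜(H) ⊆ 𝒜(H) ∪ 𝒜(H)·𝒜(H) where 𝒢(H) = F \ H and 𝒜(H) is the set of atoms of H. Then H is a conductor submonoid of F, i.e., H \ H^× is an s-ideal of F. -/

import Mathlib

def IsPrimeElem {F : Type*} [CancelCommMonoid F] (p : F) : Prop :=
  ¬ IsUnit p ∧ ∀ a b : F, p ∣ a * b → p ∣ a ∨ p ∣ b

def IsFactorialMonoid (F : Type*) [CancelCommMonoid F] : Prop :=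
  ∀ a : F, ∃ (u : F) (l : Multiset F), IsUnit u ∧ (∀ p ∈ l, IsPrimeElem p) ∧ a = u * l.prod

/-- `a` is an invertible element of the submonoid `H`, i.e. `a ∈ H^×`. -/
def IsUnitIn {F : Type*} [CancelCommMonoid F] (H : Submonoid F) (a : F) : Prop :=
  a ∈ H ∧ ∃ b ∈ H, a * b = 1

/-- `H` is a conductor submonoid of `F`: `H ≠ H^×` and `H \ H^×` is an s-ideal of `F`. -/
def IsConductorSubmonoid {F : Type*} [CancelCommMonoid F] (H : Submonoid F) : Prop :=
  (∃ a ∈ H, ¬ IsUnitIn H a) ∧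
  ∀ a ∈ H, ¬ IsUnitIn H a → ∀ y : F, a * y ∈ H ∧ ¬ IsUnitIn H (a * y)

/-- `a` is an atom of the submonoid `H`. -/
def IsAtomIn {F : Type*} [CancelCommMonoid F] (H : Submonoid F) (a : F) : Prop :=
  a ∈ H ∧ ¬ IsUnitIn H a ∧
    ∀ b c : F, b ∈ H → c ∈ H → a = b * c → IsUnitIn H b ∨ IsUnitIn H c


section Aux

variable {F : Type*} [CancelCommMonoid F]

lemma prime_dvd_prod {p : F} (hp : IsPrimeElem p) :
    ∀ (m : Multiset F), p ∣ m.prod → ∃ q ∈ m, p ∣ q := by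
  intro m
  induction m using Multiset.induction_on with
  | empty =>
    intro h
    simp only [Multiset.prod_zero] at h
    exact absurd (isUnit_of_dvd_one h) hp.1
  | cons q m ih =>
    intro h
    rw [Multiset.prod_cons] at h
    rcases hp.2 _ _ h with h | h
    · exact ⟨q, Multiset.mem_cons_self _ _, h⟩
    · obtain ⟨r, hr, hpr⟩ := ih h
      exact ⟨r, Multiset.mem_cons_of_mem hr, hpr⟩

lemma card_unique : ∀ (l m : Multiset F) (u v : F), IsUnit u → IsUnit v →
    (∀ p ∈ l, IsPrimeElem p) → (∀ p ∈ m, IsPrimeElem p) →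
    u * l.prod = v * m.prod → Multiset.card l = Multiset.card m := by
  intro l
  induction l using Multiset.induction_on with
  | empty =>
    intro m u v hu hv _ hm heq
    by_contra hne
    have hm0 : m ≠ 0 := fun h => hne (by simp [h])
    obtain ⟨q, hq⟩ := Multiset.exists_mem_of_ne_zero hm0
    have hqu : q ∣ u := by
      have hd := (Multiset.dvd_prod hq).mul_left v
      rw [← heq] at hd
      simpa using hd
    exact (hm q hq).1 (isUnit_of_dvd_one (hqu.trans hu.dvd))
  | cons p l ih =>
    intro m u v hu hv hl hm heq
    have hp := hl p (Multiset.mem_cons_self _ _)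
    rw [Multiset.prod_cons] at heq
    have hpdvd : p ∣ m.prod := by
      have hd : p ∣ v * m.prod := ⟨u * l.prod, by rw [← heq]; ac_rfl⟩
      rcases hp.2 _ _ hd with h | h
      · exact absurd (isUnit_of_dvd_one (h.trans hv.dvd)) hp.1
      · exact h
    obtain ⟨q, hqm, t, hqt⟩ := prime_dvd_prod hp m hpdvd
    have hq := hm q hqm
    have ht : IsUnit t := by
      rcases hq.2 p t (hqt ▸ dvd_refl q) with h | h
      · obtain ⟨s, hs⟩ := h
        have he : p * 1 = p * (t * s) := by
          rw [mul_one]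
          calc p = q * s := hs
          _ = p * t * s := by rw [hqt]
          _ = p * (t * s) := by ac_rfl
        exact IsUnit.of_mul_eq_one (a := t) s (mul_left_cancel he).symm
      · obtain ⟨r, hr⟩ := h
        have he : t * 1 = t * (p * r) := by
          rw [mul_one]
          calc t = q * r := hr
          _ = p * t * r := by rw [hqt]
          _ = t * (p * r) := by ac_rfl
        exact absurd (IsUnit.of_mul_eq_one (a := p) r (mul_left_cancel he).symm) hp.1
    obtain ⟨m', rfl⟩ := Multiset.exists_cons_of_mem hqm
    rw [Multiset.prod_cons, hqt] at heq
    have heq' : p * (u * l.prod) = p * ((v * t) * m'.prod) := by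
      calc p * (u * l.prod) = u * (p * l.prod) := by ac_rfl
      _ = v * (p * t * m'.prod) := heq
      _ = p * ((v * t) * m'.prod) := by ac_rfl
    have hcard := ih m' u (v * t) hu (hv.mul ht)
      (fun x hx => hl x (Multiset.mem_cons_of_mem hx))
      (fun x hx => hm x (Multiset.mem_cons_of_mem hx))
      (mul_left_cancel heq')
    simp [hcard]

lemma exists_atom_mul (hF : IsFactorialMonoid F) (H : Submonoid F)
    (hu : ∀ a ∈ H, (IsUnitIn H a ↔ IsUnit a)) :
    ∀ (n : ℕ) (a : F), a ∈ H → ¬ IsUnitIn H a →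
      (∃ l : Multiset F, (∀ p ∈ l, IsPrimeElem p) ∧ (∃ u, IsUnit u ∧ a = u * l.prod) ∧
        Multiset.card l = n) →
      ∃ p h, IsAtomIn H p ∧ h ∈ H ∧ a = p * h := by
  intro n
  induction n using Nat.strong_induction_on with
  | _ n ih =>
    rintro a haH hna ⟨l, hl, ⟨u, hu', hau⟩, hcard⟩
    by_cases hatom : ∀ b c : F, b ∈ H → c ∈ H → a = b * c → IsUnitIn H b ∨ IsUnitIn H c
    · exact ⟨a, 1, ⟨haH, hna, hatom⟩, one_mem H, (mul_one a).symm⟩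
    · push_neg at hatom
      obtain ⟨b, c, hbH, hcH, habc, hnb, hnc⟩ := hatom
      obtain ⟨ub, lb, hub, hlb, hb⟩ := hF b
      obtain ⟨uc, lc, huc, hlc, hc⟩ := hF c
      have hlbne : lb ≠ 0 := by
        rintro rfl
        exact hnb ((hu b hbH).mpr (by rw [hb]; simpa using hub))
      have hlcne : lc ≠ 0 := by
        rintro rfl
        exact hnc ((hu c hcH).mpr (by rw [hc]; simpa using huc))
      have hsum : Multiset.card lb + Multiset.card lc = n := by
        have heq : (ub * uc) * (lb + lc).prod = u * l.prod := by
          rw [← hau, habc, hb, hc, Multiset.prod_add]; ac_rfl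
        have hcu := card_unique (lb + lc) l (ub * uc) u (hub.mul huc) hu'
          (fun x hx => by
            rcases Multiset.mem_add.mp hx with h | h
            exacts [hlb x h, hlc x h]) hl heq
        rw [Multiset.card_add] at hcu
        rw [hcu, hcard]
      have hlt : Multiset.card lb < n := by
        have h1 : 0 < Multiset.card lc := Multiset.card_pos.mpr hlcne
        omega
      obtain ⟨p, h, hp, hhH, hbph⟩ := ih _ hlt b hbH hnb ⟨lb, hlb, ⟨ub, hub, hb⟩, rfl⟩
      exact ⟨p, h * c, hp, mul_mem hhH hcH, by rw [habc, hbph]; ac_rfl⟩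

end Aux

/-- a gap absorbing submonoid `H` of a factorial monoid `F` (i.e.
`H^× = F^× ∩ H`, `H ≠ H^×`, and `𝒢(H)·𝒜(H) ⊆ 𝒜(H) ∪ 𝒜(H)·𝒜(H)` with `𝒢(H) = F \ H`)
is a conductor submonoid: `H \ H^×` is an s-ideal of `F`. -/
theorem stmt_7 {F : Type*} [CancelCommMonoid F] (hF : IsFactorialMonoid F)
    (H : Submonoid F) (hu : ∀ a ∈ H, (IsUnitIn H a ↔ IsUnit a))
    (hne : ∃ a ∈ H, ¬ IsUnitIn H a)
    (hga : ∀ s u : F, s ∉ H → IsAtomIn H u →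
      IsAtomIn H (s * u) ∨ ∃ v w : F, IsAtomIn H v ∧ IsAtomIn H w ∧ s * u = v * w) :
    ∀ a ∈ H, ¬ IsUnitIn H a → ∀ y : F, a * y ∈ H ∧ ¬ IsUnitIn H (a * y) := by
  intro a haH hna y
  obtain ⟨u0, l, hu0, hl, hal⟩ := hF a
  obtain ⟨p, h, hp, hhH, haph⟩ := exists_atom_mul hF H hu (Multiset.card l) a haH hna
    ⟨l, hl, ⟨u0, hu0, hal⟩, rfl⟩
  have hmem : a * y ∈ H := by
    by_cases hy : y ∈ H
    · exact mul_mem haH hy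
    · have hyp : y * p ∈ H := by
        rcases hga y p hy hp with h' | ⟨v, w, hv, hw, hvw⟩
        · exact h'.1
        · rw [hvw]; exact mul_mem hv.1 hw.1
      have heq : a * y = (y * p) * h := by rw [haph]; ac_rfl
      rw [heq]; exact mul_mem hyp hhH
  refine ⟨hmem, fun hun => ?_⟩
  have hiu : IsUnit (a * y) := (hu _ hmem).mp hun
  exact hna ((hu a haH).mpr (isUnit_of_mul_isUnit_left hiu))
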